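/- The normalisation function φ on rooted phylogenetic networks on a finite set X is idempotent: for every rooted phylogenetic network N on X, φ(φ(N)) = φ(N). -/

import Mathlib

/-!
Formalisation framework for rooted phylogenetic networks.

A network is represented as a directed graph on an ambient vertex type `V`:
a vertex set `verts`, a root vertex `root`, and an arc relation `arc`.
-/

structure Net (V : Type*) where
  verts : Set V
  root : V
  arc : V → V → Prop

namespace Net

variable {V : Type*} {W : Type*}

/-- `N.reach u v` means there is a (possibly empty) directed path from `u` to `v`. -/
def reach (N : Net V) : V → V → Prop := Relation.ReflTransGen N.arc

/-- The in-degree of a vertex. -/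
noncomputable def inDeg (N : Net V) (v : V) : ℕ := {u | N.arc u v}.ncard

/-- The out-degree of a vertex. -/
noncomputable def outDeg (N : Net V) (v : V) : ℕ := {w | N.arc v w}.ncard

/-- The leaves of `N`: the vertices of out-degree 0. -/
def leaves (N : Net V) : Set V := {v ∈ N.verts | N.outDeg v = 0}

/-- `N.IsPathFrom u v l` : the list `l` is a directed path in `N` from `u` to `v`
(consecutive entries joined by arcs; a one-element list is the empty path). -/
def IsPathFrom (N : Net V) (u v : V) (l : List V) : Prop :=
  l.Chain' N.arc ∧ l.head? = some u ∧ l.getLast? = some v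

/-- A vertex is visible if some leaf is such that every directed path from the
root to that leaf passes through the vertex. -/
def Visible (N : Net V) (x : V) : Prop :=
  x ∈ N.verts ∧ ∃ y ∈ N.leaves, ∀ l : List V, N.IsPathFrom N.root y l → x ∈ l

/-- A subdividing vertex is one of in-degree 1 and out-degree 1. -/
def Subdividing (N : Net V) (v : V) : Prop := N.inDeg v = 1 ∧ N.outDeg v = 1

/-- The digraph `Cov(N)` on the visible vertices of `N`: an arc `(u,v)` whenever
`u ≠ v`, `u →_N v`, and no visible vertex lies strictly between `u` and `v`. -/
def cov (N : Net V) : Net V where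
  verts := {v | N.Visible v}
  root := N.root
  arc u v := N.Visible u ∧ N.Visible v ∧ u ≠ v ∧ N.reach u v ∧
    ¬ ∃ w, N.Visible w ∧ w ≠ u ∧ w ≠ v ∧ N.reach u w ∧ N.reach w v

/-- The normalisation `Ñ` of `N`: obtained from `Cov(N)` by suppressing every
subdividing vertex.  Its vertices are the visible vertices of `N` that are not
subdividing in `Cov(N)`, with an arc `(u,v)` whenever `Cov(N)` has a directed path
from `u` to `v` (of length at least one) all of whose interior vertices are
subdividing in `Cov(N)`. -/
def normalise (N : Net V) : Net V where
  verts := {v | N.Visible v ∧ ¬ N.cov.Subdividing v}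
  root := N.root
  arc u v := (N.Visible u ∧ ¬ N.cov.Subdividing u) ∧ (N.Visible v ∧ ¬ N.cov.Subdividing v) ∧
    ∃ l : List V, N.cov.IsPathFrom u v l ∧ 2 ≤ l.length ∧
      ∀ w ∈ l.tail.dropLast, N.cov.Subdividing w

/-- `N` is a rooted phylogenetic network on the finite nonempty leaf set `X`. -/
structure IsPhylo (N : Net V) (X : Set V) : Prop where
  finite : N.verts.Finite
  nonempty : X.Nonempty
  arc_mem : ∀ ⦃u v : V⦄, N.arc u v → u ∈ N.verts ∧ v ∈ N.verts
  acyclic : ∀ ⦃u v : V⦄, N.arc u v → ¬ N.reach v u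
  root_mem : N.root ∈ N.verts
  root_inDeg : N.inDeg N.root = 0
  root_unique : ∀ v ∈ N.verts, N.inDeg v = 0 → v = N.root
  leaves_eq : N.leaves = X
  leaf_inDeg : ∀ x ∈ X, N.inDeg x = 1
  interior_deg : ∀ v ∈ N.verts, v ≠ N.root → v ∉ X →
    (N.inDeg v = 1 ∧ 2 ≤ N.outDeg v) ∨ (N.outDeg v = 1 ∧ 2 ≤ N.inDeg v)

/-- `N` has no shortcuts: no arc `(u,v)` such that there is also a directed path
from `u` to `v` of length at least 2 (i.e. a path-list with at least 3 entries). -/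
def NoShortcuts (N : Net V) : Prop :=
  ∀ u v : V, N.arc u v → ¬ ∃ l : List V, N.IsPathFrom u v l ∧ 3 ≤ l.length

/-- Tree-child: every vertex is visible. -/
def TreeChild (N : Net V) : Prop := ∀ v ∈ N.verts, N.Visible v

/-- Normal: tree-child with no shortcuts. -/
def Normal (N : Net V) : Prop := N.TreeChild ∧ N.NoShortcuts

/-- A tree: every vertex has in-degree at most 1. -/
def IsTree (N : Net V) : Prop := ∀ v ∈ N.verts, N.inDeg v ≤ 1

/-- The cluster of `v`: the set of leaves reachable from `v`. -/
def cluster (N : Net V) (v : V) : Set V := {x ∈ N.leaves | N.reach v x}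

/-- The identifying set of `v`: the set of leaves `x` such that every directed
path from the root to `x` passes through `v`. -/
def ident (N : Net V) (v : V) : Set V :=
  {x ∈ N.leaves | ∀ l : List V, N.IsPathFrom N.root x l → v ∈ l}

/-- A digraph isomorphism between two networks, given by the map `f`. -/
def NetEquiv (M : Net V) (M' : Net W) (f : V → W) : Prop :=
  Set.BijOn f M.verts M'.verts ∧
    ∀ u ∈ M.verts, ∀ v ∈ M.verts, (M.arc u v ↔ M'.arc (f u) (f v))

/-- Two networks over the same ambient type are equivalent relative to a leaf set
`X` if there is a digraph isomorphism between them fixing each element of `X`. -/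
def EquivOn (M M' : Net V) (X : Set V) : Prop :=
  ∃ f : V → V, NetEquiv M M' f ∧ ∀ x ∈ X, f x = x

/-- `N₁ ⊕ N₂` : disjoint copies of `N₁` and `N₂` under a new root (`none`). -/
def oplus {V₁ V₂ : Type*} (N₁ : Net V₁) (N₂ : Net V₂) : Net (Option (V₁ ⊕ V₂)) where
  verts := insert none
    ((fun v => some (Sum.inl v)) '' N₁.verts ∪ (fun v => some (Sum.inr v)) '' N₂.verts)
  root := none
  arc a b :=
    match a, b with
    | none, some (Sum.inl w) => w = N₁.root
    | none, some (Sum.inr w) => w = N₂.root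
    | some (Sum.inl u), some (Sum.inl w) => N₁.arc u w
    | some (Sum.inr u), some (Sum.inr w) => N₂.arc u w
    | _, _ => False

/-- `N₁ ⊗ N₂` : identify each leaf `x` of `N₁` with the root of its own copy of `N₂`;
the copy of a non-leaf vertex `u` of `N₁` is `Sum.inl u`, and the vertex `w` of the
copy of `N₂` attached at leaf `x` of `N₁` is `Sum.inr (x, w)`. -/
def otimes {V₁ V₂ : Type*} (N₁ : Net V₁) (N₂ : Net V₂) : Net (V₁ ⊕ V₁ × V₂) where
  verts := Sum.inl '' (N₁.verts \ N₁.leaves) ∪ Sum.inr '' (N₁.leaves ×ˢ N₂.verts)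
  root := Sum.inl N₁.root
  arc a b :=
    match a, b with
    | Sum.inl u, Sum.inl w => N₁.arc u w ∧ w ∉ N₁.leaves
    | Sum.inl u, Sum.inr (x, w) => x ∈ N₁.leaves ∧ N₁.arc u x ∧ w = N₂.root
    | Sum.inr (x, w), Sum.inr (x', w') => x = x' ∧ x ∈ N₁.leaves ∧ N₂.arc w w'
    | _, _ => False

end Net

/-- A hierarchy: a collection of sets any two of which are disjoint or nested. -/
def IsHierarchy {V : Type*} (C : Set (Set V)) : Prop :=
  ∀ A ∈ C, ∀ B ∈ C, A ∩ B = ∅ ∨ A ⊆ B ∨ B ⊆ A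


/-!
Write `M` for the normalisation of `N`. A root-to-leaf path of `M` avoiding a vertex `v` of `M`
expands into a path of `N` avoiding `v`, so every vertex of `M` is visible in `M`. No visible
vertex `w` of `M` lies strictly between the ends `u`, `v` of an arc of `M`: otherwise, with `s`
the first suppressed vertex on that arc, the route from the root through `u`, `w` and `v` to a
leaf below `s` avoids `s`, contradicting the visibility of `s`. Hence `Cov(M) = M`. Finally, a
vertex of in- and out-degree 1 in `M` already has in- and out-degree 1 in `Cov(N)`, because a
subdividing vertex of `Cov(N)` is the only parent of its child, and a sibling of a subdividing
vertex `z` cannot reach the leaves below `z`. So `M` has nothing left to suppress.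
-/

theorem List.isChain_and_forall_mem_dropLast_iff {α : Type*} {R : α → α → Prop}
    {P : α → Prop} :
    ∀ {x : α} {l : List α}, (List.IsChain R (x :: l) ∧ ∀ w ∈ (x :: l).dropLast, P w) ↔
      List.IsChain (fun y z => P y ∧ R y z) (x :: l)
  | x, [] => by simp
  | x, y :: l => by
    rw [List.isChain_cons_cons, List.isChain_cons_cons, List.dropLast_cons_cons,
      ← List.isChain_and_forall_mem_dropLast_iff]
    simp only [List.mem_cons, forall_eq_or_imp]
    tauto

namespace Net

variable {V : Type*}

section Paths

variable {A : Net V} {s a b c u v : V}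

def ReachAvoiding (A : Net V) (s a b : V) : Prop :=
  a ≠ s ∧ Relation.ReflTransGen (fun x y => A.arc x y ∧ x ≠ s ∧ y ≠ s) a b

theorem ReachAvoiding.trans (hab : A.ReachAvoiding s a b) (hbc : A.ReachAvoiding s b c) :
    A.ReachAvoiding s a c :=
  ⟨hab.1, hab.2.trans hbc.2⟩

theorem reachAvoiding_of_reach (h : A.reach a b) (hs : A.reach a s → A.reach s b → False) :
    A.ReachAvoiding s a b := by
  induction h with
  | refl => exact ⟨by rintro rfl; exact hs .refl .refl, .refl⟩
  | @tail b c hab hbc ih =>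
    obtain ⟨ha, hab'⟩ := ih fun h₁ h₂ => hs h₁ (h₂.tail hbc)
    have hb : b ≠ s := by rintro rfl; exact hs hab (.single hbc)
    have hc : c ≠ s := by rintro rfl; exact hs (hab.tail hbc) .refl
    exact ⟨ha, hab'.tail ⟨hbc, hb, hc⟩⟩

theorem exists_isPathFrom_not_mem_iff :
    (∃ l, A.IsPathFrom a b l ∧ s ∉ l) ↔ A.ReachAvoiding s a b := by
  constructor
  · rintro ⟨_ | ⟨x, l⟩, ⟨hchain, hhead, hlast⟩, hs⟩
    · simp at hhead
    obtain rfl : x = a := by simpa using hhead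
    refine ⟨fun h => hs (h ▸ List.mem_cons_self), ?_⟩
    refine List.relationReflTransGen_of_exists_isChain_cons l
      (hchain.imp_of_mem_imp fun y z hy hz hyz => ⟨hyz, ?_, ?_⟩) ?_
    · rintro rfl; exact hs hy
    · rintro rfl; exact hs hz
    · simpa [List.getLast?_eq_some_getLast] using hlast
  · rintro ⟨ha, h⟩
    obtain ⟨l, hchain, hlast⟩ := List.exists_isChain_cons_of_relationReflTransGen h
    refine ⟨a :: l, ⟨hchain.imp fun _ _ h => h.1, rfl,
      by simp [List.getLast?_eq_some_getLast, hlast]⟩, fun hs => ?_⟩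
    exact List.IsChain.induction (· ≠ s) _ hchain (fun _ _ h _ => h.2.2) (fun _ => ha) s hs rfl

theorem visible_iff {x : V} :
    A.Visible x ↔ x ∈ A.verts ∧ ∃ y ∈ A.leaves, ¬ A.ReachAvoiding x A.root y := by
  simp only [Visible, ← exists_isPathFrom_not_mem_iff, not_exists, not_and, not_not]

def SubdivReach (A : Net V) : V → V → Prop :=
  Relation.ReflTransGen fun x y => A.Subdividing x ∧ A.arc x y

theorem exists_isPathFrom_interior_subdividing_iff :
    (∃ l, A.IsPathFrom u v l ∧ 2 ≤ l.length ∧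
      ∀ w ∈ l.tail.dropLast, A.Subdividing w) ↔
      ∃ s, A.arc u s ∧ A.SubdivReach s v := by
  constructor
  · rintro ⟨_ | ⟨x, _ | ⟨s, l⟩⟩, ⟨hchain, hhead, hlast⟩, hlen, hsub⟩
    · simp at hlen
    · simp at hlen
    obtain rfl : x = u := by simpa using hhead
    replace hchain := List.isChain_cons_cons.1 hchain
    refine ⟨s, hchain.1, List.relationReflTransGen_of_exists_isChain_cons l
      (List.isChain_and_forall_mem_dropLast_iff.1 ⟨hchain.2, hsub⟩) ?_⟩
    simpa [List.getLast?_eq_some_getLast] using hlast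
  · rintro ⟨s, hus, hsv⟩
    obtain ⟨l, hchain, hlast⟩ := List.exists_isChain_cons_of_relationReflTransGen hsv
    obtain ⟨hchain, hsub⟩ := List.isChain_and_forall_mem_dropLast_iff.2 hchain
    exact ⟨u :: s :: l, ⟨List.isChain_cons_cons.2 ⟨hus, hchain⟩, rfl,
      by simp [List.getLast?_eq_some_getLast, hlast]⟩, by simp, hsub⟩

theorem normalise_arc_iff {N : Net V} :
    N.normalise.arc u v ↔ u ∈ N.normalise.verts ∧ v ∈ N.normalise.verts ∧
      ∃ s, N.cov.arc u s ∧ N.cov.SubdivReach s v := by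
  rw [← exists_isPathFrom_interior_subdividing_iff]
  rfl

end Paths

section General

variable {A : Net V} {s a b v y : V}

theorem not_reachAvoiding_self : ¬ A.ReachAvoiding s a s := by
  rintro ⟨ha, h⟩
  rcases h.cases_tail with rfl | ⟨_, -, -, -, hs⟩
  exacts [ha rfl, hs rfl]

theorem ReachAvoiding.mono {B : Net V} (h : A.ReachAvoiding s a b)
    (hAB : ∀ x y, A.arc x y → x ≠ s → y ≠ s → B.ReachAvoiding s x y) :
    B.ReachAvoiding s a b :=
  ⟨h.1, Relation.reflTransGen_closed (fun x y hxy => (hAB x y hxy.1 hxy.2.1 hxy.2.2).2) _ _ h.2⟩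

theorem visible_of_mem_leaves (hy : y ∈ A.leaves) : A.Visible y :=
  visible_iff.2 ⟨hy.1, y, hy, not_reachAvoiding_self⟩

theorem inDeg_eq_one_of (hp : A.arc a v) (h : ∀ b, A.arc b v → b = a) : A.inDeg v = 1 :=
  Set.ncard_eq_one.2 ⟨a, Set.eq_singleton_iff_unique_mem.2 ⟨hp, h⟩⟩

theorem outDeg_eq_one_of (hp : A.arc v a) (h : ∀ b, A.arc v b → b = a) : A.outDeg v = 1 :=
  Set.ncard_eq_one.2 ⟨a, Set.eq_singleton_iff_unique_mem.2 ⟨hp, h⟩⟩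

theorem eq_of_inDeg_eq_one (h : A.inDeg v = 1) (ha : A.arc a v) (hb : A.arc b v) : a = b := by
  obtain ⟨c, hc⟩ := Set.ncard_eq_one.1 h
  have ha : a ∈ ({c} : Set V) := hc ▸ ha
  have hb : b ∈ ({c} : Set V) := hc ▸ hb
  exact ha.trans hb.symm

theorem eq_of_outDeg_eq_one (h : A.outDeg v = 1) (ha : A.arc v a) (hb : A.arc v b) : a = b := by
  obtain ⟨c, hc⟩ := Set.ncard_eq_one.1 h
  have ha : a ∈ ({c} : Set V) := hc ▸ ha
  have hb : b ∈ ({c} : Set V) := hc ▸ hb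
  exact ha.trans hb.symm

theorem exists_arc_of_inDeg_eq_one (h : A.inDeg v = 1) : ∃ a, A.arc a v :=
  Set.nonempty_of_ncard_ne_zero (ne_of_eq_of_ne h one_ne_zero)

theorem exists_arc_of_outDeg_eq_one (h : A.outDeg v = 1) : ∃ a, A.arc v a :=
  Set.nonempty_of_ncard_ne_zero (ne_of_eq_of_ne h one_ne_zero)

theorem SubdivReach.eq_of_not_subdividing (h : A.SubdivReach a b) (ha : ¬ A.Subdividing a) :
    a = b :=
  h.cases_head.resolve_right fun ⟨_, hac, _⟩ => ha hac.1

theorem normalise_eq_self (hvis : ∀ v ∈ A.verts, A.Visible v)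
    (harc : ∀ u v, A.cov.arc u v ↔ A.arc u v) (hsub : ∀ v, ¬ A.cov.Subdividing v) :
    A.normalise = A := by
  have hverts : A.normalise.verts = A.verts :=
    Set.ext fun v => ⟨fun hv => hv.1.1, fun hv => ⟨hvis v hv, hsub v⟩⟩
  have harcs : A.normalise.arc = A.arc := by
    ext u v
    rw [normalise_arc_iff]
    constructor
    · rintro ⟨-, -, s, hus, hsv⟩
      exact hsv.eq_of_not_subdividing (hsub s) ▸ (harc u s).1 hus
    · intro huv
      have huv := (harc u v).2 huv
      exact ⟨⟨huv.1, hsub u⟩, ⟨huv.2.1, hsub v⟩, v, huv, .refl⟩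
  change Net.mk A.normalise.verts A.root A.normalise.arc = A
  rw [hverts, harcs]

end General

section Normalise

variable {N : Net V} {s a b : V}

theorem reach_of_cov_arc (h : N.cov.arc a b) : N.reach a b := h.2.2.2.1

theorem SubdivReach.reach (h : N.cov.SubdivReach a b) : N.reach a b :=
  Relation.reflTransGen_closed (fun _ _ h => reach_of_cov_arc h.2) _ _ h

theorem reach_of_normalise_arc (h : N.normalise.arc a b) : N.reach a b := by
  obtain ⟨-, -, c, hac, hcb⟩ := normalise_arc_iff.1 h
  exact (reach_of_cov_arc hac).trans hcb.reach

theorem reach_of_normalise_reach (h : N.normalise.reach a b) : N.reach a b :=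
  Relation.reflTransGen_closed (fun _ _ => reach_of_normalise_arc) _ _ h

theorem normalise_arc_of_cov_arc (h : N.cov.arc a b) (ha : a ∈ N.normalise.verts)
    (hb : b ∈ N.normalise.verts) : N.normalise.arc a b :=
  normalise_arc_iff.2 ⟨ha, hb, b, h, .refl⟩

theorem reachAvoiding_of_cov_arc (h : N.cov.arc a b) (hs : N.Visible s) (ha : a ≠ s)
    (hb : b ≠ s) : N.ReachAvoiding s a b :=
  reachAvoiding_of_reach (reach_of_cov_arc h) fun has hsb =>
    h.2.2.2.2 ⟨s, hs, ha.symm, hb.symm, has, hsb⟩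

theorem reachAvoiding_of_normalise_arc (h : N.normalise.arc a b) (hs : s ∈ N.normalise.verts)
    (ha : a ≠ s) (hb : b ≠ s) : N.ReachAvoiding s a b := by
  obtain ⟨-, -, c, hac, hcb⟩ := normalise_arc_iff.1 h
  have hcb : N.ReachAvoiding s c b := by
    clear hac
    induction hcb using Relation.ReflTransGen.head_induction_on with
    | refl => exact ⟨hb, .refl⟩
    | head hcd _ ih =>
      have hc : _ ≠ s := fun hcs => hs.2 (hcs ▸ hcd.1)
      exact (reachAvoiding_of_cov_arc hcd.2 hs.1 hc ih.1).trans ih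
  exact (reachAvoiding_of_cov_arc hac hs.1 ha hcb.1).trans hcb

end Normalise

noncomputable def numDesc (N : Net V) (a : V) : ℕ := {x | N.reach a x}.ncard

namespace IsPhylo

variable {N : Net V} {X : Set V} {a b u v w x y z : V}

theorem eq_of_reach_of_reach (hN : N.IsPhylo X) (hab : N.reach a b) (hba : N.reach b a) :
    a = b := by
  rcases hab.cases_head with rfl | ⟨c, hac, hcb⟩
  · rfl
  · exact absurd (hcb.trans hba) (hN.acyclic hac)

theorem ne_of_arc (hN : N.IsPhylo X) (h : N.arc a b) : a ≠ b := by
  rintro rfl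
  exact hN.acyclic h .refl

theorem not_reach_of_cov_arc (hN : N.IsPhylo X) (h : N.cov.arc a b) : ¬ N.reach b a :=
  fun hba => h.2.2.1 (hN.eq_of_reach_of_reach (reach_of_cov_arc h) hba)

theorem mem_verts_of_reach (hN : N.IsPhylo X) (ha : a ∈ N.verts) (h : N.reach a b) :
    b ∈ N.verts := by
  induction h with
  | refl => exact ha
  | tail _ hbc _ => exact (hN.arc_mem hbc).2

theorem numDesc_lt (hN : N.IsPhylo X) (h : N.reach a b) (hab : a ≠ b) :
    N.numDesc b < N.numDesc a := by
  obtain ⟨c, hac, -⟩ := h.cases_head.resolve_left hab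
  refine Set.ncard_lt_ncard ⟨fun x hx => h.trans hx, fun hsub => ?_⟩
    (hN.finite.subset fun x => hN.mem_verts_of_reach (hN.arc_mem hac).1)
  exact hab (hN.eq_of_reach_of_reach h (hsub (Relation.ReflTransGen.refl : N.reach a a)))

theorem reach_root (hN : N.IsPhylo X) (hv : v ∈ N.verts) : N.reach N.root v := by
  obtain ⟨u, ⟨hu, huv⟩, hmax⟩ := Set.exists_max_image {u | u ∈ N.verts ∧ N.reach u v}
    N.numDesc (hN.finite.subset fun _ h => h.1) ⟨v, hv, .refl⟩
  obtain rfl : u = N.root := by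
    by_contra hur
    obtain ⟨p, hp⟩ : ∃ p, N.arc p u :=
      Set.nonempty_of_ncard_ne_zero fun h0 => hur (hN.root_unique u hu h0)
    exact (hmax p ⟨(hN.arc_mem hp).1, huv.head hp⟩).not_gt
      (hN.numDesc_lt (.single hp) (hN.ne_of_arc hp))
  exact huv

theorem eq_of_mem_leaves_of_reach (hN : N.IsPhylo X) (hy : y ∈ N.leaves) (h : N.reach y z) :
    z = y := by
  rcases h.cases_head with rfl | ⟨c, hyc, -⟩
  · rfl
  · have hempty := (Set.ncard_eq_zero (hN.finite.subset fun w hw => (hN.arc_mem hw).2)).1 hy.2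
    exact absurd (hempty ▸ hyc : c ∈ (∅ : Set V)) (Set.notMem_empty c)

theorem exists_leaf_of_visible (hN : N.IsPhylo X) (hx : N.Visible x) :
    ∃ y ∈ N.leaves, N.reach x y ∧ ¬ N.ReachAvoiding x N.root y := by
  obtain ⟨-, y, hy, hav⟩ := visible_iff.1 hx
  refine ⟨y, hy, by_contra fun hxy => hav ?_, hav⟩
  exact reachAvoiding_of_reach (hN.reach_root hy.1) fun _ h => hxy h

theorem not_cov_arc_of_mem_leaves (hN : N.IsPhylo X) (hy : y ∈ N.leaves) : ¬ N.cov.arc y z :=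
  fun h => h.2.2.1 (hN.eq_of_mem_leaves_of_reach hy (reach_of_cov_arc h)).symm

theorem mem_normalise_verts_of_mem_leaves (hN : N.IsPhylo X) (hy : y ∈ N.leaves) :
    y ∈ N.normalise.verts := by
  refine ⟨visible_of_mem_leaves hy, fun hs => ?_⟩
  obtain ⟨z, hz⟩ := exists_arc_of_outDeg_eq_one hs.2
  exact hN.not_cov_arc_of_mem_leaves hy hz

theorem mem_normalise_leaves (hN : N.IsPhylo X) (hy : y ∈ N.leaves) :
    y ∈ N.normalise.leaves := by
  refine ⟨hN.mem_normalise_verts_of_mem_leaves hy, ?_⟩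
  have hempty : {z | N.normalise.arc y z} = ∅ := Set.eq_empty_of_forall_notMem fun z hz => by
    obtain ⟨-, -, s, hys, -⟩ := normalise_arc_iff.1 hz
    exact hN.not_cov_arc_of_mem_leaves hy hys
  change Set.ncard _ = 0
  rw [hempty, Set.ncard_empty]

theorem exists_cov_arc_reach_of_reach (hN : N.IsPhylo X) (ha : N.Visible a) (hb : N.Visible b)
    (hab : a ≠ b) (h : N.reach a b) : ∃ c, N.cov.arc a c ∧ N.reach c b := by
  -- a visible vertex between `a` and `b` with the most descendants is a child of `a` in `Cov(N)`
  obtain ⟨c, ⟨hc, hca, hac, hcb⟩, hmax⟩ := Set.exists_max_image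
    {w | N.Visible w ∧ w ≠ a ∧ N.reach a w ∧ N.reach w b} N.numDesc
    (hN.finite.subset fun _ h => h.1.1) ⟨b, hb, hab.symm, h, .refl⟩
  refine ⟨c, ⟨ha, hc, hca.symm, hac, fun ⟨w, hw, hwa, hwc, haw, hwc'⟩ => ?_⟩, hcb⟩
  exact (hmax w ⟨hw, hwa, haw, hwc'.trans hcb⟩).not_gt (hN.numDesc_lt hwc' hwc)

theorem exists_reach_cov_arc_of_reach (hN : N.IsPhylo X) (ha : N.Visible a) (hb : N.Visible b)
    (hab : a ≠ b) (h : N.reach a b) : ∃ c, N.reach a c ∧ N.cov.arc c b := by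
  obtain ⟨c, ⟨hc, hcb, hac, hcb'⟩, hmin⟩ := Set.exists_min_image
    {w | N.Visible w ∧ w ≠ b ∧ N.reach a w ∧ N.reach w b} N.numDesc
    (hN.finite.subset fun _ h => h.1.1) ⟨a, ha, hab, .refl, h⟩
  refine ⟨c, hac, hc, hb, hcb, hcb', fun ⟨w, hw, hwc, hwb, hcw, hwb'⟩ => ?_⟩
  exact (hmin w ⟨hw, hwb, hac.trans hcw, hwb'⟩).not_gt (hN.numDesc_lt hcw hwc.symm)

theorem reach_of_subdivReach_of_reach (hN : N.IsPhylo X) (h : N.cov.SubdivReach a b)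
    (hy : y ∈ N.normalise.verts) (hay : N.reach a y) : N.reach b y := by
  induction h using Relation.ReflTransGen.head_induction_on with
  | refl => exact hay
  | head hac _ ih =>
    obtain ⟨hsub, hac⟩ := hac
    have hay' : _ ≠ y := fun e => hy.2 (e ▸ hsub)
    obtain ⟨d, had, hdy⟩ := hN.exists_cov_arc_reach_of_reach hac.1 hy.1 hay' hay
    exact ih (eq_of_outDeg_eq_one hsub.2 had hac ▸ hdy)

theorem exists_subdivReach_reach (hN : N.IsPhylo X) (hz : N.Visible z)
    (hy : y ∈ N.normalise.verts) (hzy : N.reach z y) :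
    ∃ q ∈ N.normalise.verts, N.cov.SubdivReach z q ∧ N.reach q y := by
  induction hn : N.numDesc z using Nat.strong_induction_on generalizing z with
  | _ n ih =>
  by_cases hs : N.cov.Subdividing z
  · have hzy' : z ≠ y := fun e => hy.2 (e ▸ hs)
    obtain ⟨t, hzt, hty⟩ := hN.exists_cov_arc_reach_of_reach hz hy.1 hzy' hzy
    obtain ⟨q, hq, htq, hqy⟩ := ih _ (hn ▸ hN.numDesc_lt (reach_of_cov_arc hzt) hzt.2.2.1)
      hzt.2.1 hty rfl
    exact ⟨q, hq, .head ⟨hs, hzt⟩ htq, hqy⟩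
  · exact ⟨z, ⟨hz, hs⟩, .refl, hzy⟩

theorem eq_of_cov_arc_of_subdividing (hN : N.IsPhylo X) (hz : N.cov.Subdividing z)
    (hzv : N.cov.arc z v) (hwv : N.cov.arc w v) : w = z := by
  by_contra hwz
  obtain ⟨y, hy, hzy, hav⟩ := hN.exists_leaf_of_visible hzv.1
  have hvy : N.reach v y := hN.reach_of_subdivReach_of_reach (.single ⟨hz, hzv⟩)
    (hN.mem_normalise_verts_of_mem_leaves hy) hzy
  have hroot_w : N.ReachAvoiding z N.root w := by
    refine reachAvoiding_of_reach (hN.reach_root hwv.1.1) fun _ hzw => ?_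
    obtain ⟨t, hzt, htw⟩ := hN.exists_cov_arc_reach_of_reach hzv.1 hwv.1 (Ne.symm hwz) hzw
    exact hN.not_reach_of_cov_arc hwv (eq_of_outDeg_eq_one hz.2 hzt hzv ▸ htw)
  have hv_y : N.ReachAvoiding z v y :=
    reachAvoiding_of_reach hvy fun hvz _ => hN.not_reach_of_cov_arc hzv hvz
  exact hav (hroot_w.trans ((reachAvoiding_of_cov_arc hwv hzv.1 hwz hzv.2.2.1.symm).trans hv_y))

theorem not_reach_of_cov_arc_of_subdividing (hN : N.IsPhylo X) (hz : N.cov.Subdividing z)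
    (hvz : N.cov.arc v z) (hvw : N.cov.arc v w) (hwz : w ≠ z)
    (hav : ¬ N.ReachAvoiding z N.root y) : ¬ N.reach w y := by
  intro hwy
  have hroot_v : N.ReachAvoiding z N.root v :=
    reachAvoiding_of_reach (hN.reach_root hvz.1.1) fun _ hzv => hN.not_reach_of_cov_arc hvz hzv
  have hw_y : N.ReachAvoiding z w y := by
    refine reachAvoiding_of_reach hwy fun hwz' _ => ?_
    obtain ⟨p, hwp, hpz⟩ := hN.exists_reach_cov_arc_of_reach hvw.2.1 hvz.2.1 hwz hwz'
    exact hN.not_reach_of_cov_arc hvw (eq_of_inDeg_eq_one hz.1 hpz hvz ▸ hwp)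
  exact hav (hroot_v.trans ((reachAvoiding_of_cov_arc hvw hvz.2.1 hvz.2.2.1 hwz).trans hw_y))

theorem not_between_of_normalise_arc (hN : N.IsPhylo X) (huv : N.normalise.arc u v)
    (hw : w ∈ N.normalise.verts) (hwu : w ≠ u) (hwv : w ≠ v) (huw : N.reach u w)
    (hwv' : N.reach w v) : False := by
  obtain ⟨hu, hv, s, hus, hsv⟩ := normalise_arc_iff.1 huv
  by_cases hs : N.cov.Subdividing s
  swap
  · obtain rfl := hsv.eq_of_not_subdividing hs
    exact hus.2.2.2.2 ⟨w, hw.1, hwu, hwv, huw, hwv'⟩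
  obtain ⟨y, hy, hsy, hav⟩ := hN.exists_leaf_of_visible hus.2.1
  have hvy := hN.reach_of_subdivReach_of_reach hsv (hN.mem_normalise_verts_of_mem_leaves hy) hsy
  have hroot_u : N.ReachAvoiding s N.root u :=
    reachAvoiding_of_reach (hN.reach_root hu.1.1) fun _ hsu => hN.not_reach_of_cov_arc hus hsu
  have hu_w : N.ReachAvoiding s u w := reachAvoiding_of_reach huw fun _ hsw =>
    hwv (hN.eq_of_reach_of_reach hwv' (hN.reach_of_subdivReach_of_reach hsv hw hsw))
  have hw_v : N.ReachAvoiding s w v := by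
    refine reachAvoiding_of_reach hwv' fun hws _ => ?_
    obtain ⟨p, hwp, hps⟩ := hN.exists_reach_cov_arc_of_reach hw.1 hus.2.1
      (fun e => hw.2 (e ▸ hs)) hws
    exact hwu (hN.eq_of_reach_of_reach (eq_of_inDeg_eq_one hs.1 hps hus ▸ hwp) huw)
  have hv_y : N.ReachAvoiding s v y := reachAvoiding_of_reach hvy fun hvs _ =>
    hv.2 (hN.eq_of_reach_of_reach hsv.reach hvs ▸ hs)
  exact hav (hroot_u.trans (hu_w.trans (hw_v.trans hv_y)))

theorem ne_of_normalise_arc (hN : N.IsPhylo X) (h : N.normalise.arc u v) : u ≠ v := by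
  obtain ⟨-, -, s, hus, hsv⟩ := normalise_arc_iff.1 h
  rintro rfl
  exact hN.not_reach_of_cov_arc hus hsv.reach

theorem visible_normalise (hN : N.IsPhylo X) (hv : v ∈ N.normalise.verts) :
    N.normalise.Visible v := by
  obtain ⟨-, y, hy, hav⟩ := visible_iff.1 hv.1
  refine visible_iff.2 ⟨hv, y, hN.mem_normalise_leaves hy, fun h => hav ?_⟩
  exact h.mono fun a b hab ha hb => reachAvoiding_of_normalise_arc hab hv ha hb

theorem normalise_cov_arc_iff (hN : N.IsPhylo X) (u v : V) :
    N.normalise.cov.arc u v ↔ N.normalise.arc u v := by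
  constructor
  · rintro ⟨-, -, huv, hr, hnm⟩
    obtain ⟨m, hum, hmv⟩ := hr.cases_head.resolve_left huv
    by_contra h
    have hm := (normalise_arc_iff.1 hum).2.1
    exact hnm ⟨m, hN.visible_normalise hm, (hN.ne_of_normalise_arc hum).symm,
      fun e => h (e ▸ hum), .single hum, hmv⟩
  · intro h
    obtain ⟨hu, hv, -⟩ := normalise_arc_iff.1 h
    refine ⟨hN.visible_normalise hu, hN.visible_normalise hv, hN.ne_of_normalise_arc h,
      .single h, fun ⟨w, hw, hwu, hwv, huw, hwv'⟩ => ?_⟩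
    exact hN.not_between_of_normalise_arc h hw.1 hwu hwv (reach_of_normalise_reach huw)
      (reach_of_normalise_reach hwv')

theorem cov_inDeg_eq_one_of_normalise_inDeg_eq_one (hN : N.IsPhylo X)
    (hv : v ∈ N.normalise.verts) (hin : N.normalise.inDeg v = 1) : N.cov.inDeg v = 1 := by
  obtain ⟨p, hpv⟩ := exists_arc_of_inDeg_eq_one hin
  obtain ⟨-, -, s, hps, hsv⟩ := normalise_arc_iff.1 hpv
  obtain ⟨z, hzv⟩ : ∃ z, N.cov.arc z v := by
    rcases hsv.cases_tail with rfl | ⟨z, -, -, hzv⟩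
    exacts [⟨p, hps⟩, ⟨z, hzv⟩]
  refine inDeg_eq_one_of hzv fun w hwv => ?_
  by_cases hz : N.cov.Subdividing z
  · exact hN.eq_of_cov_arc_of_subdividing hz hzv hwv
  by_cases hw : N.cov.Subdividing w
  · exact (hN.eq_of_cov_arc_of_subdividing hw hwv hzv).symm
  exact eq_of_inDeg_eq_one hin (normalise_arc_of_cov_arc hwv ⟨hwv.1, hw⟩ hv)
    (normalise_arc_of_cov_arc hzv ⟨hzv.1, hz⟩ hv)

theorem cov_outDeg_eq_one_of_normalise_outDeg_eq_one (hN : N.IsPhylo X)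
    (hv : v ∈ N.normalise.verts) (hout : N.normalise.outDeg v = 1) : N.cov.outDeg v = 1 := by
  have hsucc : ∀ {z y}, N.cov.arc v z → y ∈ N.normalise.verts → N.reach z y →
      ∃ q, N.normalise.arc v q ∧ N.reach z q ∧ N.reach q y := fun hvz hy hzy => by
    obtain ⟨q, hq, hzq, hqy⟩ := hN.exists_subdivReach_reach hvz.2.1 hy hzy
    exact ⟨q, normalise_arc_iff.2 ⟨hv, hq, _, hvz, hzq⟩, hzq.reach, hqy⟩
  -- Both children lead to the single out-neighbour of `v` in the normalisation, so `w` reaches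
  -- a leaf that only paths through `z` can reach.
  have not_subdividing_of_sibling : ∀ {z w}, N.cov.arc v z → N.cov.arc v w → w ≠ z → ¬ N.cov.Subdividing z := by
    intro z w hvz hvw hwz hz
    obtain ⟨y, hy, hzy, hav⟩ := hN.exists_leaf_of_visible hvz.2.1
    obtain ⟨q, hvq, -, hqy⟩ := hsucc hvz (hN.mem_normalise_verts_of_mem_leaves hy) hzy
    obtain ⟨y', hy', hwy', -⟩ := hN.exists_leaf_of_visible hvw.2.1
    obtain ⟨q', hvq', hwq', -⟩ := hsucc hvw (hN.mem_normalise_verts_of_mem_leaves hy') hwy'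
    exact hN.not_reach_of_cov_arc_of_subdividing hz hvz hvw hwz hav
      (hwq'.trans (eq_of_outDeg_eq_one hout hvq' hvq ▸ hqy))
  obtain ⟨q, hvq⟩ := exists_arc_of_outDeg_eq_one hout
  obtain ⟨-, -, z, hvz, -⟩ := normalise_arc_iff.1 hvq
  refine outDeg_eq_one_of hvz fun w hvw => by_contra fun hwz => ?_
  have hz := not_subdividing_of_sibling hvz hvw hwz
  have hw := not_subdividing_of_sibling hvw hvz (Ne.symm hwz)
  exact hwz (eq_of_outDeg_eq_one hout (normalise_arc_of_cov_arc hvw hv ⟨hvw.2.1, hw⟩)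
    (normalise_arc_of_cov_arc hvz hv ⟨hvz.2.1, hz⟩))

theorem not_subdividing_normalise_cov (hN : N.IsPhylo X) (v : V) :
    ¬ N.normalise.cov.Subdividing v := by
  intro h
  have hsub : N.normalise.Subdividing v := by
    simpa only [Subdividing, inDeg, outDeg, hN.normalise_cov_arc_iff] using h
  obtain ⟨p, hpv⟩ := exists_arc_of_inDeg_eq_one hsub.1
  have hv := (normalise_arc_iff.1 hpv).2.1
  exact hv.2 ⟨hN.cov_inDeg_eq_one_of_normalise_inDeg_eq_one hv hsub.1,
    hN.cov_outDeg_eq_one_of_normalise_outDeg_eq_one hv hsub.2⟩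

end IsPhylo

end Net

/-- The normalisation function `φ` is idempotent: `φ(φ(N)) = φ(N)` for
every rooted phylogenetic network `N`. -/
theorem stmt8 {V : Type*} (N : Net V) (X : Set V) (hN : N.IsPhylo X) :
    N.normalise.normalise = N.normalise :=
  Net.normalise_eq_self (fun _ hv => hN.visible_normalise hv) hN.normalise_cov_arc_iff
    hN.not_subdividing_normalise_cov
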